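/- arXiv:math-ph/0408035 — 2 statements merged into one kernel-verified Lean document; each statement's English description precedes it below -/
import Mathlib

section
/- For density matrices ρ, σ, the squared Bures distance d(ρ,σ)² = 2(1 - f(ρ,σ)) satisfies d(ρ,σ)² ≤ D(ρ,σ), where D(ρ,σ) = Tr|ρ - σ| is the trace distance and f(ρ,σ) = Tr|ρ^{1/2}σ^{1/2}| is the fidelity. -/
/-!
Write `A = √ρ`, `B = √σ`. Since `Re Tr M ≤ Tr |M|`, the fidelity is at least `Re Tr (A B)`, and
as `Tr ρ = Tr σ = 1` we have `2 - 2 Re Tr (A B) = Tr (A - B)²`. So it is enough to prove the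
Powers–Størmer inequality `Tr (A - B)² ≤ Tr |A² - B²|` for `A, B ≥ 0`.

Let `C = A - B` and `S = sign C`, so that `S C = C S = |C|` and `-1 ≤ S ≤ 1`. Because
`2 (A² - B²) = (A + B) C + C (A + B)`, we get `Tr (S (A² - B²)) = Tr (|C| (A + B))`, which exceeds
`Tr C²` by `2 Tr (C⁺ B + C⁻ A) ≥ 0`. Finally `Tr (S X) ≤ Tr |X|` for self-adjoint `X`: split
`X = X⁺ - X⁻` and use `Tr (P Q) ≥ 0` for `P, Q ≥ 0`.
-/

open Matrix Kronecker
open scoped ComplexOrder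

open scoped Classical in
/-- Positive semidefinite square root (zero if the matrix is not PSD). -/
noncomputable def psqrt {n : Type*} [Fintype n] [DecidableEq n] (A : Matrix n n ℂ) : Matrix n n ℂ :=
  if h : A.PosSemidef then
    (h.1.eigenvectorUnitary : Matrix n n ℂ) * diagonal ((↑) ∘ (√·) ∘ h.1.eigenvalues) *
      (star h.1.eigenvectorUnitary : Matrix n n ℂ) else 0

/-- Matrix absolute value `|A| = √(Aᴴ A)`. -/
noncomputable def matAbs {n : Type*} [Fintype n] [DecidableEq n] (A : Matrix n n ℂ) : Matrix n n ℂ :=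
  psqrt (Aᴴ * A)

open scoped MatrixOrder InnerProductSpace

section

variable {𝕜 E : Type*} [RCLike 𝕜] [NormedAddCommGroup E] [InnerProductSpace 𝕜 E]
  [CompleteSpace E]

lemma ContinuousLinearMap.norm_apply_eq_of_star_mul_self_eq {A B : E →L[𝕜] E}
    (h : star A * A = star B * B) (x : E) : ‖A x‖ = ‖B x‖ := by
  have hsq : ‖A x‖ ^ 2 = ‖B x‖ ^ 2 := by
    simp only [apply_norm_sq_eq_inner_adjoint_left, ← star_eq_adjoint]
    exact congrArg (fun T : E →L[𝕜] E => RCLike.re ⟪T x, x⟫_𝕜) h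
  exact (pow_left_inj₀ (norm_nonneg _) (norm_nonneg _) two_ne_zero).1 hsq

end

namespace Matrix

variable {𝕜 n : Type*} [RCLike 𝕜] [Fintype n] [DecidableEq n]

lemma trace_eq_sum_inner (M : Matrix n n 𝕜)
    (b : OrthonormalBasis n 𝕜 (EuclideanSpace 𝕜 n)) :
    M.trace = ∑ i, ⟪b i, toEuclideanCLM (𝕜 := 𝕜) M (b i)⟫_𝕜 := by
  calc M.trace = LinearMap.trace 𝕜 _ (toEuclideanLin M) := by
        rw [toEuclideanLin_eq_toLin_orthonormal, trace_toLin_eq]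
    _ = _ := LinearMap.trace_eq_sum_inner _ b

lemma trace_mul_nonneg {P Q : Matrix n n 𝕜} (hP : 0 ≤ P) (hQ : 0 ≤ Q) : 0 ≤ (P * Q).trace := by
  have hconj : 0 ≤ CFC.sqrt Q * P * CFC.sqrt Q := by
    have := star_left_conjugate_nonneg hP (CFC.sqrt Q)
    rwa [(CFC.sqrt_nonneg Q).isSelfAdjoint.star_eq] at this
  calc (0 : 𝕜) ≤ (CFC.sqrt Q * P * CFC.sqrt Q).trace :=
        (nonneg_iff_posSemidef.1 hconj).trace_nonneg
    _ = (P * Q).trace := by rw [trace_mul_cycle, CFC.sqrt_mul_sqrt_self Q hQ, trace_mul_comm]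

lemma trace_mul_le_trace_abs {W X : Matrix n n 𝕜} (hX : IsSelfAdjoint X) (hW₁ : -1 ≤ W)
    (hW₂ : W ≤ 1) : (W * X).trace ≤ (CFC.abs X).trace := by
  have hsplit : CFC.abs X - W * X = (1 - W) * X⁺ + (1 + W) * X⁻ :=
    calc CFC.abs X - W * X = (X⁺ + X⁻) - W * (X⁺ - X⁻) := by
          rw [CFC.posPart_add_negPart X, CFC.posPart_sub_negPart X]
      _ = _ := by noncomm_ring
  rw [← sub_nonneg, ← trace_sub, hsplit, trace_add]
  exact add_nonneg (trace_mul_nonneg (sub_nonneg.2 hW₂) (CFC.posPart_nonneg X))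
    (trace_mul_nonneg (neg_le_iff_add_nonneg'.1 hW₁) (CFC.negPart_nonneg X))

/- In an eigenbasis of `|M|`, the identity `‖M v‖ = ‖|M| v‖` makes Cauchy–Schwarz a termwise
bound. -/
lemma re_trace_le_re_trace_abs (M : Matrix n n 𝕜) :
    RCLike.re M.trace ≤ RCLike.re (CFC.abs M).trace := by
  have hP : (CFC.abs M).PosSemidef := nonneg_iff_posSemidef.1 (CFC.abs_nonneg M)
  set b := hP.1.eigenvectorBasis
  have hb (i : n) : ‖b i‖ = 1 := b.orthonormal.1 i
  have hPb (i : n) :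
      toEuclideanCLM (𝕜 := 𝕜) (CFC.abs M) (b i) = (hP.1.eigenvalues i : 𝕜) • b i := by
    ext1
    rw [ofLp_toEuclideanCLM, hP.1.mulVec_eigenvectorBasis, WithLp.ofLp_smul,
      RCLike.real_smul_eq_coe_smul (K := 𝕜)]
  have hnorm (v : EuclideanSpace 𝕜 n) :
      ‖toEuclideanCLM (𝕜 := 𝕜) M v‖ = ‖toEuclideanCLM (𝕜 := 𝕜) (CFC.abs M) v‖ := by
    refine ContinuousLinearMap.norm_apply_eq_of_star_mul_self_eq ?_ v
    rw [← map_star, ← map_mul, ← map_star, ← map_mul,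
      (CFC.abs_nonneg M).isSelfAdjoint.star_eq, CFC.abs_mul_abs]
  rw [trace_eq_sum_inner M b, trace_eq_sum_inner _ b, map_sum, map_sum]
  refine Finset.sum_le_sum fun i _ => (re_inner_le_norm _ _).trans_eq ?_
  rw [hb, one_mul, hnorm, hPb, norm_smul, hb, mul_one, inner_smul_right,
    inner_self_eq_norm_sq_to_K, hb]
  simp [abs_of_nonneg (hP.eigenvalues_nonneg i)]

section Sign

noncomputable def cfcSign (C : Matrix n n 𝕜) : Matrix n n 𝕜 :=
  cfc (fun x : ℝ => (SignType.sign x : ℝ)) C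

variable {C : Matrix n n 𝕜}

lemma cfcSign_mul_self (hC : IsSelfAdjoint C) : cfcSign C * C = CFC.abs C := by
  conv_lhs => enter [2]; rw [← cfc_id' ℝ C]
  rw [cfcSign, ← cfc_mul _ _ _ (finite_real_spectrum.continuousOn _), CFC.abs_eq_cfc_norm C]
  exact cfc_congr fun x _ => sign_mul_self x

lemma self_mul_cfcSign (hC : IsSelfAdjoint C) : C * cfcSign C = CFC.abs C := by
  conv_lhs => enter [1]; rw [← cfc_id' ℝ C]
  rw [cfcSign, ← cfc_mul _ _ _ (finite_real_spectrum.continuousOn _)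
    (finite_real_spectrum.continuousOn _), CFC.abs_eq_cfc_norm C]
  exact cfc_congr fun x _ => self_mul_sign x

lemma neg_one_le_cfcSign (hC : IsSelfAdjoint C) : -1 ≤ cfcSign C := by
  simpa [cfcSign] using algebraMap_le_cfc (fun x : ℝ => (SignType.sign x : ℝ)) (-1) C
    (fun x _ => by cases SignType.sign x <;> norm_num) (finite_real_spectrum.continuousOn _)

lemma cfcSign_le_one : cfcSign C ≤ 1 :=
  cfc_le_one _ C fun x _ => by cases SignType.sign x <;> norm_num

end Sign

section PowersStormer

variable {A B : Matrix n n 𝕜}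

lemma trace_cfcSign_mul_sq_sub_sq (hA : IsSelfAdjoint A) (hB : IsSelfAdjoint B) :
    (cfcSign (A - B) * (A ^ 2 - B ^ 2)).trace = (CFC.abs (A - B) * (A + B)).trace := by
  have hC : IsSelfAdjoint (A - B) := hA.sub hB
  set S := cfcSign (A - B)
  refine mul_left_cancel₀ (two_ne_zero (α := 𝕜)) ?_
  calc 2 * (S * (A ^ 2 - B ^ 2)).trace
      = (S * ((A + B) * (A - B))).trace + (S * ((A - B) * (A + B))).trace := by
        rw [two_mul, ← trace_add, ← trace_add, ← mul_add, ← mul_add]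
        congr 2
        noncomm_ring
    _ = ((A - B) * S * (A + B)).trace + (S * (A - B) * (A + B)).trace := by
        rw [trace_mul_cycle', ← mul_assoc, ← mul_assoc]
    _ = 2 * (CFC.abs (A - B) * (A + B)).trace := by
        rw [self_mul_cfcSign hC, cfcSign_mul_self hC, two_mul]

lemma trace_sub_sq_le_trace_abs_sub_mul_add (hA : 0 ≤ A) (hB : 0 ≤ B) :
    ((A - B) ^ 2).trace ≤ (CFC.abs (A - B) * (A + B)).trace := by
  set C := A - B
  have hC : IsSelfAdjoint C := hA.isSelfAdjoint.sub hB.isSelfAdjoint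
  have hsplit : CFC.abs C * (A + B) - C ^ 2 = 2 • (C⁺ * B + C⁻ * A) :=
    calc CFC.abs C * (A + B) - C ^ 2 = (C⁺ + C⁻) * (A + B) - (C⁺ - C⁻) * (A - B) := by
          rw [CFC.posPart_add_negPart C, CFC.posPart_sub_negPart C, sq]
      _ = _ := by noncomm_ring
  rw [← sub_nonneg, ← trace_sub, hsplit, trace_smul, trace_add]
  exact smul_nonneg zero_le_two (add_nonneg (trace_mul_nonneg (CFC.posPart_nonneg C) hB)
    (trace_mul_nonneg (CFC.negPart_nonneg C) hA))

theorem trace_sub_sq_le_trace_abs_sq_sub_sq (hA : 0 ≤ A) (hB : 0 ≤ B) :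
    ((A - B) ^ 2).trace ≤ (CFC.abs (A ^ 2 - B ^ 2)).trace :=
  calc ((A - B) ^ 2).trace ≤ (CFC.abs (A - B) * (A + B)).trace :=
        trace_sub_sq_le_trace_abs_sub_mul_add hA hB
    _ = (cfcSign (A - B) * (A ^ 2 - B ^ 2)).trace :=
        (trace_cfcSign_mul_sq_sub_sq hA.isSelfAdjoint hB.isSelfAdjoint).symm
    _ ≤ (CFC.abs (A ^ 2 - B ^ 2)).trace :=
        trace_mul_le_trace_abs ((hA.isSelfAdjoint.pow 2).sub (hB.isSelfAdjoint.pow 2))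
          (neg_one_le_cfcSign (hA.isSelfAdjoint.sub hB.isSelfAdjoint)) cfcSign_le_one

end PowersStormer

end Matrix

lemma psqrt_eq_sqrt {n : Type*} [Fintype n] [DecidableEq n] {A : Matrix n n ℂ}
    (hA : A.PosSemidef) : psqrt A = CFC.sqrt A := by
  rw [psqrt, dif_pos hA, CFC.sqrt_eq_real_sqrt A hA.nonneg, cfcₙ_eq_cfc, hA.1.cfc_eq]
  rfl

lemma matAbs_eq_abs {n : Type*} [Fintype n] [DecidableEq n] (A : Matrix n n ℂ) :
    matAbs A = CFC.abs A :=
  psqrt_eq_sqrt (posSemidef_conjTranspose_mul_self A)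

theorem bures_sq_le_traceDist {n : Type*} [Fintype n] [DecidableEq n]
    (ρ σ : Matrix n n ℂ) (hρ : ρ.PosSemidef) (hσ : σ.PosSemidef)
    (hρ1 : ρ.trace = 1) (hσ1 : σ.trace = 1) :
    2 * (1 - ((matAbs (psqrt ρ * psqrt σ)).trace).re) ≤ ((matAbs (ρ - σ)).trace).re := by
  rw [matAbs_eq_abs, matAbs_eq_abs, psqrt_eq_sqrt hρ, psqrt_eq_sqrt hσ]
  set A := CFC.sqrt ρ
  set B := CFC.sqrt σ
  have hA : A ^ 2 = ρ := CFC.sq_sqrt ρ hρ.nonneg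
  have hB : B ^ 2 = σ := CFC.sq_sqrt σ hσ.nonneg
  have hdist : ((A - B) ^ 2).trace = 2 - 2 * (A * B).trace := by
    have hexpand : (A - B) ^ 2 = A ^ 2 + B ^ 2 - A * B - B * A := by noncomm_ring
    rw [hexpand, trace_sub, trace_sub, trace_add, hA, hB, hρ1, hσ1, trace_mul_comm B A]
    ring
  have hdist_le : 2 - 2 * (A * B).trace.re ≤ (CFC.abs (ρ - σ)).trace.re := by
    have := (Complex.le_def.1
      (trace_sub_sq_le_trace_abs_sq_sub_sq (CFC.sqrt_nonneg ρ) (CFC.sqrt_nonneg σ))).1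
    rwa [hdist, hA, hB, Complex.sub_re, Complex.mul_re, Complex.re_ofNat, Complex.im_ofNat,
      zero_mul, sub_zero] at this
  have hfid : (A * B).trace.re ≤ (CFC.abs (A * B)).trace.re := re_trace_le_re_trace_abs (A * B)
  linarith
end

section
/- For positive semidefinite n×n matrices R, S, the supremum over all matrices X, Y satisfying X†X = R, Y†Y = S of Re Tr(X†Y) equals Tr√(R^{1/2} S R^{1/2}). -/
open Matrix Kronecker
open scoped ComplexOrder

/-!
With `P = √R`, `Q = √S` and `T = √(P S P)`: two matrices with the same Gram matrix `Aᴴ A`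
differ by a unitary factor on the left, so every admissible pair is `X = U₁ P`, `Y = U₂ Q`, and
`Q P = V T` for a unitary `V`. Then `Tr (Xᴴ Y) = Tr (U₁ᴴ U₂ V T)`, and `Re Tr (W T) ≤ Tr T` for
unitary `W` by the AM–GM bound `2 Re Tr (Aᴴ B) ≤ Tr (Aᴴ A) + Tr (Bᴴ B)` applied to
`A = √T Wᴴ`, `B = √T`. The value `Tr T` is attained at `X = V P`, `Y = Q`.
-/

section PositiveSqrt

variable {n : Type*} [Fintype n] [DecidableEq n] {A : Matrix n n ℂ}

lemma posSemidef_psqrt (hA : A.PosSemidef) : (psqrt A).PosSemidef := by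
  rw [psqrt, dif_pos hA]
  have hD : (diagonal ((↑) ∘ (√·) ∘ hA.1.eigenvalues) : Matrix n n ℂ).PosSemidef :=
    posSemidef_diagonal_iff.mpr fun i => Complex.zero_le_real.mpr (Real.sqrt_nonneg _)
  simpa [star_eq_conjTranspose] using hD.mul_mul_conjTranspose_same hA.1.eigenvectorUnitary.1

lemma psqrt_mul_self (hA : A.PosSemidef) : psqrt A * psqrt A = A := by
  set U : Matrix n n ℂ := ↑hA.1.eigenvectorUnitary
  set D : Matrix n n ℂ := diagonal ((↑) ∘ (√·) ∘ hA.1.eigenvalues)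
  have hUU : star U * U = 1 := UnitaryGroup.star_mul_self _
  have hDD : D * D = diagonal (RCLike.ofReal ∘ hA.1.eigenvalues) := by
    rw [diagonal_mul_diagonal]
    congr 1
    funext i
    simp [← Complex.ofReal_mul, Real.mul_self_sqrt (hA.eigenvalues_nonneg i)]
  calc psqrt A * psqrt A = U * D * star U * (U * D * star U) := by rw [psqrt, dif_pos hA]
    _ = U * (D * (star U * U) * D) * star U := by simp only [Matrix.mul_assoc]
    _ = A := by
      rw [hUU, Matrix.mul_one, hDD]
      simpa only [Unitary.conjStarAlgAut_apply] using hA.1.spectral_theorem.symm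

end PositiveSqrt

theorem LinearMap.exists_linearIsometry_comp_eq_of_norm_apply_eq {𝕜 E V : Type*} [RCLike 𝕜]
    [AddCommGroup E] [Module 𝕜 E] [NormedAddCommGroup V] [InnerProductSpace 𝕜 V]
    [FiniteDimensional 𝕜 V] {f g : E →ₗ[𝕜] V} (h : ∀ x, ‖f x‖ = ‖g x‖) :
    ∃ L : V →ₗᵢ[𝕜] V, ∀ x, L (g x) = f x := by
  have hker : LinearMap.ker g ≤ LinearMap.ker f := fun x hx => by
    rw [LinearMap.mem_ker] at hx ⊢
    simpa [← norm_eq_zero, h x] using hx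
  let L₀ : LinearMap.range g →ₗ[𝕜] V :=
    (LinearMap.ker g).liftQ f hker ∘ₗ (g.quotKerEquivRange.symm : _ →ₗ[𝕜] _)
  have hL₀ : ∀ x, L₀ ⟨g x, LinearMap.mem_range_self g x⟩ = f x := fun x => by
    simp [L₀, LinearMap.quotKerEquivRange_symm_apply_image]
  let L : LinearMap.range g →ₗᵢ[𝕜] V := ⟨L₀, by rintro ⟨_, x, rfl⟩; rw [hL₀, h]; rfl⟩
  exact ⟨L.extend, fun x => (L.extend_apply ⟨g x, LinearMap.mem_range_self g x⟩).trans (hL₀ x)⟩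

section Unitary

variable {𝕜 n : Type*} [RCLike 𝕜] [Fintype n] [DecidableEq n]

lemma Matrix.adjoint_toEuclideanCLM_comp_self (A : Matrix n n 𝕜) :
    (toEuclideanCLM (𝕜 := 𝕜) A).adjoint ∘L toEuclideanCLM (𝕜 := 𝕜) A =
      toEuclideanCLM (𝕜 := 𝕜) (Aᴴ * A) := by
  rw [map_mul, ← star_eq_conjTranspose, map_star]
  rfl

theorem Matrix.exists_mem_unitaryGroup_eq_mul_of_conjTranspose_mul_self_eq {A B : Matrix n n 𝕜}
    (h : Aᴴ * A = Bᴴ * B) : ∃ U ∈ unitaryGroup n 𝕜, A = U * B := by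
  have hnorm (x) : ‖toEuclideanCLM (𝕜 := 𝕜) A x‖ = ‖toEuclideanCLM (𝕜 := 𝕜) B x‖ := by
    rw [← sq_eq_sq₀ (norm_nonneg _) (norm_nonneg _),
      ContinuousLinearMap.apply_norm_sq_eq_inner_adjoint_right,
      ContinuousLinearMap.apply_norm_sq_eq_inner_adjoint_right, adjoint_toEuclideanCLM_comp_self,
      adjoint_toEuclideanCLM_comp_self, h]
  obtain ⟨L, hL⟩ := LinearMap.exists_linearIsometry_comp_eq_of_norm_apply_eq hnorm
  set W : Matrix n n 𝕜 := (toEuclideanCLM (n := n) (𝕜 := 𝕜)).symm L.toContinuousLinearMap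
  have hW : toEuclideanCLM (𝕜 := 𝕜) W = L.toContinuousLinearMap :=
    StarAlgEquiv.apply_symm_apply _ _
  have hinj := EquivLike.injective (toEuclideanCLM (n := n) (𝕜 := 𝕜))
  refine ⟨W, mem_unitaryGroup_iff'.mpr <| hinj ?_, hinj ?_⟩
  · rw [star_eq_conjTranspose, ← adjoint_toEuclideanCLM_comp_self, hW, map_one]
    exact (ContinuousLinearMap.norm_map_iff_adjoint_comp_self _).mp L.norm_map
  · rw [map_mul, hW]
    exact ContinuousLinearMap.ext fun x => (hL x).symm

end Unitary

section Trace

open RCLike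

variable {𝕜 m n : Type*} [RCLike 𝕜] [Fintype m] [Fintype n]

lemma Matrix.two_mul_re_trace_conjTranspose_mul_le (A B : Matrix m n 𝕜) :
    2 * re (Aᴴ * B).trace ≤ re (Aᴴ * A).trace + re (Bᴴ * B).trace := by
  have hsq : 0 ≤ re ((A - B)ᴴ * (A - B)).trace :=
    (nonneg_iff.mp (posSemidef_conjTranspose_mul_self (A - B)).trace_nonneg).1
  have hBA : re (Bᴴ * A).trace = re (Aᴴ * B).trace := by
    simpa using congrArg re (trace_conjTranspose (Aᴴ * B))
  simp only [conjTranspose_sub, Matrix.sub_mul, Matrix.mul_sub, trace_sub, map_sub] at hsq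
  linarith

lemma Matrix.re_trace_mul_conjTranspose_mul_self_le [DecidableEq n] {U : Matrix n n 𝕜}
    (hU : U ∈ unitaryGroup n 𝕜) (B : Matrix m n 𝕜) :
    re (U * (Bᴴ * B)).trace ≤ re (Bᴴ * B).trace := by
  have hUU : Uᴴ * U = 1 := mem_unitaryGroup_iff'.mp hU
  have hcross : (B * Uᴴ)ᴴ * B = U * (Bᴴ * B) := by
    rw [conjTranspose_mul, conjTranspose_conjTranspose, Matrix.mul_assoc]
  have hsq : ((B * Uᴴ)ᴴ * (B * Uᴴ)).trace = (Bᴴ * B).trace :=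
    calc ((B * Uᴴ)ᴴ * (B * Uᴴ)).trace = (B * Uᴴ * (B * Uᴴ)ᴴ).trace := trace_mul_comm _ _
      _ = (B * (Uᴴ * U) * Bᴴ).trace := by
        rw [conjTranspose_mul, conjTranspose_conjTranspose]; simp only [Matrix.mul_assoc]
      _ = (Bᴴ * B).trace := by rw [hUU, Matrix.mul_one, trace_mul_comm]
  have h := two_mul_re_trace_conjTranspose_mul_le (B * Uᴴ) B
  rw [hcross, hsq] at h
  linarith

end Trace

lemma Matrix.re_trace_mul_le_of_posSemidef {n : Type*} [Fintype n] [DecidableEq n]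
    {U T : Matrix n n ℂ} (hU : U ∈ unitaryGroup n ℂ) (hT : T.PosSemidef) :
    (U * T).trace.re ≤ T.trace.re := by
  have hT' : T = (psqrt T)ᴴ * psqrt T := by
    rw [(posSemidef_psqrt hT).1.eq, psqrt_mul_self hT]
  rw [hT']
  exact re_trace_mul_conjTranspose_mul_self_le hU _

theorem uhlmann_sup_overlap {n : Type*} [Fintype n] [DecidableEq n]
    (R S : Matrix n n ℂ) (hR : R.PosSemidef) (hS : S.PosSemidef) :
    sSup {x : ℝ | ∃ X Y : Matrix n n ℂ, Xᴴ * X = R ∧ Yᴴ * Y = S ∧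
        x = ((Xᴴ * Y).trace).re} =
      ((psqrt (psqrt R * S * psqrt R)).trace).re := by
  set P := psqrt R
  set Q := psqrt S
  have hP : P.IsHermitian := (posSemidef_psqrt hR).1
  have hRP : R = Pᴴ * P := by rw [hP.eq, psqrt_mul_self hR]
  have hSQ : S = Qᴴ * Q := by rw [(posSemidef_psqrt hS).1.eq, psqrt_mul_self hS]
  have hPSP : (P * S * P).PosSemidef := by
    simpa only [hP.eq] using hS.mul_mul_conjTranspose_same P
  set T := psqrt (P * S * P)
  obtain ⟨V, hV, hQP⟩ : ∃ V ∈ unitaryGroup n ℂ, Q * P = V * T := by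
    refine exists_mem_unitaryGroup_eq_mul_of_conjTranspose_mul_self_eq ?_
    rw [(posSemidef_psqrt hPSP).1.eq, psqrt_mul_self hPSP, hSQ, conjTranspose_mul, hP.eq]
    simp only [Matrix.mul_assoc]
  have hVV : Vᴴ * V = 1 := mem_unitaryGroup_iff'.mp hV
  have htrace (U W : Matrix n n ℂ) : ((U * P)ᴴ * (W * Q)).trace = (Uᴴ * W * V * T).trace := by
    rw [conjTranspose_mul, hP.eq, Matrix.mul_assoc, trace_mul_comm, Matrix.mul_assoc,
      Matrix.mul_assoc W, hQP]
    simp only [Matrix.mul_assoc]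
  refine IsGreatest.csSup_eq ⟨⟨V * P, 1 * Q, ?_, ?_, ?_⟩, ?_⟩
  · rw [hRP, conjTranspose_mul, Matrix.mul_assoc, ← Matrix.mul_assoc Vᴴ, hVV, Matrix.one_mul]
  · rw [Matrix.one_mul, hSQ]
  · rw [htrace, Matrix.mul_one, hVV, Matrix.one_mul]
  · rintro _ ⟨X, Y, hX, hY, rfl⟩
    obtain ⟨U₁, hU₁, rfl⟩ :=
      exists_mem_unitaryGroup_eq_mul_of_conjTranspose_mul_self_eq (hX.trans hRP)
    obtain ⟨U₂, hU₂, rfl⟩ :=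
      exists_mem_unitaryGroup_eq_mul_of_conjTranspose_mul_self_eq (hY.trans hSQ)
    rw [htrace]
    exact re_trace_mul_le_of_posSemidef
      (mul_mem (mul_mem (Unitary.star_mem hU₁) hU₂) hV) (posSemidef_psqrt hPSP)
end
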